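/- arXiv:1208.1291 — 2 statements merged into one kernel-verified Lean document; each statement's English description precedes it below -/
import Mathlib

section
/- A kG-module P is weakly projective (i.e., Hom_{kG}(P,−) preserves exactness of k-split short exact sequences) if and only if there exists θ ∈ End_k(P) with Tr_G(θ) = id_P (Higman's criterion). -/
open Finset

universe u

section Prelude

variable {k G : Type u} [CommRing k] [Group G] [Fintype G]
variable {M N : Type u} [AddCommGroup M] [Module k M] [AddCommGroup N] [Module k N]

/-- The trace map `Tr_G(θ)(m) = ∑ g, g • θ(g⁻¹ • m)`. -/
noncomputable def traceMap (ρM : Representation k G M) (ρN : Representation k G N)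
    (θ : M →ₗ[k] N) : M →ₗ[k] N :=
  ∑ g : G, (ρN g) ∘ₗ θ ∘ₗ (ρM g⁻¹)

/-- `f` is a `kG`-module homomorphism, i.e. a `G`-equivariant `k`-linear map. -/
def IsGEquiv (ρM : Representation k G M) (ρN : Representation k G N)
    (f : M →ₗ[k] N) : Prop :=
  ∀ g : G, f ∘ₗ (ρM g) = (ρN g) ∘ₗ f

/-- The induced module `M↑G = kG ⊗ₖ M`, modelled as `G →₀ M`, where `h • (g ⊗ m) = hg ⊗ m`. -/
noncomputable def ind (k G M : Type u) [CommRing k] [Group G] [AddCommGroup M] [Module k M] :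
    Representation k G (G →₀ M) where
  toFun h := Finsupp.lmapDomain M k (fun x => h * x)
  map_one' := by
    refine LinearMap.ext fun f => ?_
    show Finsupp.mapDomain (fun x => (1:G) * x) f = f
    simp only [one_mul]
    exact Finsupp.mapDomain_id
  map_mul' h₁ h₂ := by
    refine LinearMap.ext fun f => ?_
    simp only [Finsupp.lmapDomain_apply, Module.End.mul_apply]
    rw [show (fun x => h₁ * h₂ * x) = (fun x => h₁ * x) ∘ (fun x => h₂ * x) by
      funext x; simp [mul_assoc]]
    exact Finsupp.mapDomain_comp

/-- The natural map `ι_M : M → M↑G`, `m ↦ ∑ g, g ⊗ g⁻¹m`. -/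
noncomputable def indI (ρM : Representation k G M) : M →ₗ[k] (G →₀ M) :=
  ∑ g : G, (Finsupp.lsingle g) ∘ₗ (ρM g⁻¹)

/-- The natural map `π_M : M↑G → M`, `g ⊗ m ↦ g·m`. -/
noncomputable def indP (ρM : Representation k G M) : (G →₀ M) →ₗ[k] M :=
  Finsupp.lsum k fun g => (ρM g : M →ₗ[k] M)

end Prelude

section WeakDefs

variable {k G : Type u} [CommRing k] [Group G] [Fintype G]

/-- A `kG`-module `P` is weakly projective if every `kG`-homomorphism out of `P`
lifts along any `k`-split epimorphism of `kG`-modules. -/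
def WeaklyProjective {P : Type u} [AddCommGroup P] [Module k P]
    (ρP : Representation k G P) : Prop :=
  ∀ (M N : Type u) [AddCommGroup M] [Module k M] [AddCommGroup N] [Module k N]
    (ρM : Representation k G M) (ρN : Representation k G N) (π : M →ₗ[k] N),
    IsGEquiv ρM ρN π → (∃ s : N →ₗ[k] M, π ∘ₗ s = LinearMap.id) →
    ∀ f : P →ₗ[k] N, IsGEquiv ρP ρN f →
      ∃ fl : P →ₗ[k] M, IsGEquiv ρP ρM fl ∧ π ∘ₗ fl = f

/-- A `kG`-module `P` is weakly injective if every `kG`-homomorphism into `P`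
extends along any `k`-split monomorphism of `kG`-modules. -/
def WeaklyInjective {P : Type u} [AddCommGroup P] [Module k P]
    (ρP : Representation k G P) : Prop :=
  ∀ (L M : Type u) [AddCommGroup L] [Module k L] [AddCommGroup M] [Module k M]
    (ρL : Representation k G L) (ρM : Representation k G M) (ι : L →ₗ[k] M),
    IsGEquiv ρL ρM ι → (∃ r : M →ₗ[k] L, r ∘ₗ ι = LinearMap.id) →
    ∀ f : L →ₗ[k] P, IsGEquiv ρL ρP f →
      ∃ fe : M →ₗ[k] P, IsGEquiv ρM ρP fe ∧ fe ∘ₗ ι = f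

end WeakDefs


/-! Both directions run through the trace. If `Tr_G(θ) = id`, a `kG`-map `f : P → N` lifts
along `π` with `k`-section `s` as `Tr_G(s ∘ f ∘ θ)`: the trace is `kG`-linear and commutes
with composition by `kG`-maps, so `π ∘ Tr_G(s ∘ f ∘ θ) = Tr_G(f ∘ θ) = f ∘ Tr_G(θ) = f`.
Conversely, the augmentation `π_P : P↑G → P` is `k`-split by `p ↦ 1 ⊗ p`; a `kG`-lift `φ`
of `id_P` through it yields `θ := (coefficient at 1) ∘ φ`, whose trace is `π_P ∘ φ = id_P`. -/

section Trace

variable {k G : Type u} [CommRing k] [Group G] [Fintype G]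
variable {L M N : Type u} [AddCommGroup L] [Module k L] [AddCommGroup M] [Module k M]
  [AddCommGroup N] [Module k N]

omit [Fintype G] in
lemma IsGEquiv.apply {ρM : Representation k G M} {ρN : Representation k G N}
    {f : M →ₗ[k] N} (hf : IsGEquiv ρM ρN f) (g : G) (m : M) :
    f (ρM g m) = ρN g (f m) :=
  LinearMap.congr_fun (hf g) m

omit [Fintype G] in
lemma isGEquiv_id (ρM : Representation k G M) : IsGEquiv ρM ρM LinearMap.id :=
  fun _ => rfl

lemma traceMap_apply (ρM : Representation k G M) (ρN : Representation k G N)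
    (θ : M →ₗ[k] N) (m : M) :
    traceMap ρM ρN θ m = ∑ g : G, ρN g (θ (ρM g⁻¹ m)) := by
  simp [traceMap]

lemma isGEquiv_traceMap (ρM : Representation k G M) (ρN : Representation k G N)
    (θ : M →ₗ[k] N) : IsGEquiv ρM ρN (traceMap ρM ρN θ) := by
  intro h
  ext m
  simp only [LinearMap.comp_apply, traceMap_apply, map_sum]
  rw [← Equiv.sum_comp (Equiv.mulLeft h)]
  refine Finset.sum_congr rfl fun g _ => ?_
  have hM : ρM (h * g)⁻¹ (ρM h m) = ρM g⁻¹ m := by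
    rw [← Module.End.mul_apply, ← map_mul, mul_inv_rev, inv_mul_cancel_right]
  rw [Equiv.coe_mulLeft, hM, map_mul, Module.End.mul_apply]

lemma IsGEquiv.comp_traceMap {ρL : Representation k G L} {ρM : Representation k G M}
    {ρN : Representation k G N} {π : M →ₗ[k] N} (hπ : IsGEquiv ρM ρN π) (θ : L →ₗ[k] M) :
    π ∘ₗ traceMap ρL ρM θ = traceMap ρL ρN (π ∘ₗ θ) := by
  ext l
  simp only [LinearMap.comp_apply, traceMap_apply, map_sum, hπ.apply]

end Trace

section Induced

variable {k G : Type u} [CommRing k] [Group G]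
variable {L M : Type u} [AddCommGroup L] [Module k L] [AddCommGroup M] [Module k M]

lemma ind_apply (h : G) (x : G →₀ M) (g : G) : ind k G M h x g = x (h⁻¹ * g) := by
  rw [← Finsupp.mapDomain_apply (mul_right_injective h) x (h⁻¹ * g), mul_inv_cancel_left]
  rfl

lemma isGEquiv_indP (ρM : Representation k G M) : IsGEquiv (ind k G M) ρM (indP ρM) := by
  intro g
  refine Finsupp.lhom_ext fun a m => ?_
  simp [ind, indP]

lemma indP_comp_lsingle_one (ρM : Representation k G M) :
    indP ρM ∘ₗ Finsupp.lsingle 1 = LinearMap.id := by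
  ext m
  simp [indP]

variable [Fintype G]

lemma indP_apply (ρM : Representation k G M) (x : G →₀ M) :
    indP ρM x = ∑ g : G, ρM g (x g) := by
  rw [indP, Finsupp.lsum_apply, Finsupp.sum_fintype]
  intro g
  simp

lemma traceMap_lapply_one_comp {ρL : Representation k G L} (ρM : Representation k G M)
    {φ : L →ₗ[k] (G →₀ M)} (hφ : IsGEquiv ρL (ind k G M) φ) :
    traceMap ρL ρM (Finsupp.lapply 1 ∘ₗ φ) = indP ρM ∘ₗ φ := by
  ext l
  simp only [traceMap_apply, LinearMap.comp_apply, Finsupp.lapply_apply, hφ.apply, ind_apply,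
    inv_inv, mul_one, indP_apply]

end Induced

/-- Higman's criterion: `P` is weakly projective iff
`Tr_G(θ) = id_P` for some `θ ∈ End_k(P)`. -/
theorem weaklyProjective_iff_exists_trace_eq_id
    {k G : Type u} [CommRing k] [Group G] [Fintype G]
    {P : Type u} [AddCommGroup P] [Module k P] (ρP : Representation k G P) :
    WeaklyProjective ρP ↔ ∃ θ : P →ₗ[k] P, traceMap ρP ρP θ = LinearMap.id := by
  constructor
  · intro hP
    obtain ⟨φ, hφ, hφ_lift⟩ := hP (G →₀ P) P (ind k G P) ρP (indP ρP) (isGEquiv_indP ρP)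
      ⟨_, indP_comp_lsingle_one ρP⟩ LinearMap.id (isGEquiv_id ρP)
    exact ⟨Finsupp.lapply 1 ∘ₗ φ, (traceMap_lapply_one_comp ρP hφ).trans hφ_lift⟩
  · rintro ⟨θ, hθ⟩ M N _ _ _ _ ρM ρN π hπ ⟨s, hs⟩ f hf
    refine ⟨traceMap ρP ρM (s ∘ₗ f ∘ₗ θ), isGEquiv_traceMap ρP ρM _, ?_⟩
    calc π ∘ₗ traceMap ρP ρM (s ∘ₗ f ∘ₗ θ)
        = traceMap ρP ρN (f ∘ₗ θ) := by
          rw [hπ.comp_traceMap, ← LinearMap.comp_assoc, hs, LinearMap.id_comp]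
      _ = f := by rw [← hf.comp_traceMap, hθ, LinearMap.comp_id]
end

section
/- Let G be a finite group and n > 1 an integer. Let Γ_n(ℤ) be the cokernel of the ℤG-map ℤ → ℤ↑G ⊕ ℤ_(n) sending m to (ι_ℤ(m), m), where ℤ_(n) is ℤ localized by inverting all integers coprime to n. Then Γ_n(ℤ) is weakly injective as a ℤG-module if and only if G is trivial. -/
/-!
Write `Γ = (ℤG ⊕ ℤ_(n)) / ℤ(N, 1)` with `N = ∑ g`. If `Γ` is weakly injective, Higman's criterion
gives `θ` with `Tr_G θ = id`. Reducing the augmentation of the `ℤG`-coordinate mod `|G|` gives a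
`G`-invariant `p : Γ → ℤ/|G|`, so `p (Tr_G θ z) = p (θ (N z))`. For `z = [(1, 0)]` we get
`N z = [(N, 0)] = -[(0, 1)]`. Since `Hom(ℤ_(n), ℤ) = 0`, `θ` maps the image of `ℤ_(n)` into classes
`[(aN, y)]`, whose augmentation `a|G|` vanishes mod `|G|`. Hence `1 = p z = 0` in `ℤ/|G|`.
Conversely, over the trivial group every map is equivariant, so `f ∘ r` extends `f` along `ι`
whenever `r ∘ ι = id`.
-/

open Finset

universe u

section Gamma

variable (G : Type) [Group G] [Fintype G]

/-- The multiplicative set of integers coprime to `n`. -/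
def coprimeSubmonoid (n : ℤ) : Submonoid ℤ where
  carrier := {x : ℤ | IsCoprime x n}
  one_mem' := isCoprime_one_left
  mul_mem' := fun ha hb => IsCoprime.mul_left ha hb

/-- `ℤ_(n)`: the localization of `ℤ` inverting all integers coprime to `n`. -/
abbrev Zloc (n : ℤ) := Localization (coprimeSubmonoid n)

/-- The `ℤG`-map `ℤ → ℤ↑G ⊕ ℤ_(n)`, `m ↦ (ι_ℤ(m), m)`. -/
noncomputable def gammaMap (n : ℤ) : ℤ →ₗ[ℤ] (G →₀ ℤ) × Zloc n :=
  LinearMap.prod (indI (Representation.trivial ℤ (G := G) (V := ℤ)))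
    (Algebra.linearMap ℤ (Zloc n))

/-- `Γ_n(ℤ)`: the cokernel of `ℤ → ℤ↑G ⊕ ℤ_(n)`. -/
noncomputable abbrev GammaMod (n : ℤ) :=
  ((G →₀ ℤ) × Zloc n) ⧸ LinearMap.range (gammaMap G n)

/-- The `G`-action on `ℤ↑G ⊕ ℤ_(n)`: the induced action on the first factor and the
trivial action on the second. -/
noncomputable def bigRep (n : ℤ) : Representation ℤ G ((G →₀ ℤ) × Zloc n) where
  toFun g := ((ind ℤ G ℤ) g).prodMap LinearMap.id
  map_one' := by
    refine LinearMap.ext fun x => ?_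
    simp
  map_mul' g h := by
    refine LinearMap.ext fun x => ?_
    simp

theorem ind_indI_trivial (g : G) (m : ℤ) :
    ((ind ℤ G ℤ) g) ((indI (Representation.trivial ℤ (G := G) (V := ℤ))) m)
      = (indI (Representation.trivial ℤ (G := G) (V := ℤ))) m := by
  classical
  have h : (indI (Representation.trivial ℤ (G := G) (V := ℤ))) m
      = ∑ g' : G, Finsupp.single g' m := by
    simp [indI, Representation.trivial_apply]
  rw [h]
  show Finsupp.mapDomain (fun x => g * x) _ = _
  rw [Finsupp.mapDomain_finset_sum]
  exact Fintype.sum_equiv (Equiv.mulLeft g) _ _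
    (fun x => by simp [Finsupp.mapDomain_single])

/-- The range of `gammaMap` is `G`-invariant. -/
theorem gammaMap_range_le (n : ℤ) (g : G) :
    LinearMap.range (gammaMap G n) ≤
      (LinearMap.range (gammaMap G n)).comap (bigRep G n g) := by
  rintro x ⟨m, rfl⟩
  refine Submodule.mem_comap.2 ⟨m, ?_⟩
  refine Prod.ext ?_ rfl
  exact (ind_indI_trivial G g m).symm

/-- The induced `G`-action on `Γ_n(ℤ)`. -/
noncomputable def gammaRep (n : ℤ) : Representation ℤ G (GammaMod G n) where
  toFun g := Submodule.mapQ _ _ (bigRep G n g) (gammaMap_range_le G n g)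
  map_one' := by
    refine LinearMap.ext fun x => ?_
    obtain ⟨y, rfl⟩ := Submodule.Quotient.mk_surjective _ x
    rw [Submodule.mapQ_apply, map_one]
    rfl
  map_mul' g h := by
    refine LinearMap.ext fun x => ?_
    obtain ⟨y, rfl⟩ := Submodule.Quotient.mk_surjective _ x
    try dsimp only
    rw [Module.End.mul_apply, Submodule.mapQ_apply, Submodule.mapQ_apply,
      Submodule.mapQ_apply, map_mul]
    rfl

end Gamma

section Higman

variable {k G : Type u} [CommRing k] [Group G]
variable {M P : Type u} [AddCommGroup M] [Module k M] [AddCommGroup P] [Module k P]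

theorem ind_single (g h : G) (m : M) :
    ind k G M g (Finsupp.single h m) = Finsupp.single (g * h) m :=
  Finsupp.mapDomain_single

theorem weaklyInjective_of_subsingleton [Fintype G] [Subsingleton G]
    (ρ : Representation k G P) : WeaklyInjective ρ := by
  intro L M _ _ _ _ ρL ρM ι _ ⟨r, hr⟩ f _
  refine ⟨f ∘ₗ r, fun g => ?_, by rw [LinearMap.comp_assoc, hr, LinearMap.comp_id]⟩
  rw [Subsingleton.elim g 1, map_one, map_one]
  rfl

variable [Fintype G]

theorem indI_apply (ρ : Representation k G M) (m : M) :
    indI ρ m = ∑ g : G, Finsupp.single g (ρ g⁻¹ m) := by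
  simp [indI]

theorem indI_isGEquiv (ρ : Representation k G M) : IsGEquiv ρ (ind k G M) (indI ρ) := by
  intro g
  refine LinearMap.ext fun m => ?_
  simp only [LinearMap.comp_apply, indI_apply, map_sum, ind_single]
  exact Fintype.sum_equiv (Equiv.mulLeft g⁻¹) _ _ fun h => by simp [map_mul]

theorem lapply_one_comp_indI (ρ : Representation k G M) :
    Finsupp.lapply 1 ∘ₗ indI ρ = LinearMap.id := by
  refine LinearMap.ext fun m => ?_
  classical
  simp [indI_apply, Finsupp.single_apply]

theorem traceMap_comp_lsingle_one (ρ : Representation k G M) (ρP : Representation k G P)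
    {f : (G →₀ M) →ₗ[k] P} (hf : IsGEquiv (ind k G M) ρP f) :
    traceMap ρ ρP (f ∘ₗ Finsupp.lsingle 1) = f ∘ₗ indI ρ := by
  refine LinearMap.ext fun m => ?_
  simp only [traceMap, LinearMap.sum_apply, LinearMap.comp_apply, indI_apply, map_sum]
  refine Finset.sum_congr rfl fun g _ => ?_
  rw [← LinearMap.comp_apply (ρP g), ← hf g, LinearMap.comp_apply, Finsupp.lsingle_apply,
    ind_single, mul_one]

/-- Higman's criterion: a `G`-retraction of `ι_P : P → P↑G`, restricted to `1 ⊗ P`, has trace the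
identity. -/
theorem WeaklyInjective.exists_traceMap_eq_id {ρ : Representation k G P}
    (h : WeaklyInjective ρ) : ∃ θ : P →ₗ[k] P, traceMap ρ ρ θ = LinearMap.id := by
  obtain ⟨f, hf, hfι⟩ := h P (G →₀ P) ρ (ind k G P) (indI ρ) (indI_isGEquiv ρ)
    ⟨_, lapply_one_comp_indI ρ⟩ LinearMap.id fun g => by rw [LinearMap.id_comp, LinearMap.comp_id]
  exact ⟨f ∘ₗ Finsupp.lsingle 1, (traceMap_comp_lsingle_one ρ ρ hf).trans hfι⟩

theorem traceMap_apply_of_invariant {A : Type*} [AddCommGroup A] [Module k A]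
    (ρ : Representation k G P) {p : P →ₗ[k] A} (hp : ∀ g, p ∘ₗ ρ g = p) (θ : P →ₗ[k] P) (z : P) :
    p (traceMap ρ ρ θ z) = p (θ (∑ g : G, ρ g z)) := by
  simp only [traceMap, LinearMap.sum_apply, LinearMap.comp_apply, map_sum]
  refine Fintype.sum_equiv (Equiv.inv G) _ _ fun g => ?_
  rw [← LinearMap.comp_apply p (ρ g), hp]
  rfl

end Higman

namespace Zloc

theorem isUnit_algebraMap_one_add_mul (n a : ℤ) : IsUnit (algebraMap ℤ (Zloc n) (1 + a * n)) :=
  IsLocalization.map_units (Zloc n) (⟨1 + a * n, 1, -a, by ring⟩ : coprimeSubmonoid n)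

/-- `f x` is divisible by the unit `1 + |f x| n² > |f x|` of `ℤ_(n)`, hence vanishes. -/
theorem linearMap_int_eq_zero {n : ℤ} (hn : n ≠ 0) (f : Zloc n →ₗ[ℤ] ℤ) : f = 0 := by
  refine LinearMap.ext fun x => ?_
  obtain ⟨u, hu⟩ := isUnit_algebraMap_one_add_mul n (|f x| * n)
  set s := 1 + |f x| * n * n
  have hdvd : s ∣ f x := by
    refine ⟨f (↑u⁻¹ * x), ?_⟩
    rw [← smul_eq_mul, ← map_zsmul, zsmul_eq_mul, ← eq_intCast (algebraMap ℤ (Zloc n)), ← hu,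
      ← mul_assoc, Units.mul_inv, one_mul]
  have hlt : |f x| < s := by nlinarith [abs_nonneg (f x), mul_self_pos.2 hn]
  exact Int.eq_zero_of_abs_lt_dvd hdvd hlt

theorem linearMap_finsupp_eq_zero {ι : Type*} {n : ℤ} (hn : n ≠ 0)
    (f : Zloc n →ₗ[ℤ] (ι →₀ ℤ)) : f = 0 :=
  LinearMap.ext fun x => Finsupp.ext fun i =>
    LinearMap.congr_fun (linearMap_int_eq_zero hn (Finsupp.lapply i ∘ₗ f)) x

end Zloc

section GroupRing

noncomputable def augmentation (G : Type*) : (G →₀ ℤ) →ₗ[ℤ] ℤ :=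
  Finsupp.lsum ℤ fun _ => LinearMap.id

theorem augmentation_single {G : Type*} (g : G) (m : ℤ) :
    augmentation G (Finsupp.single g m) = m :=
  Finsupp.lsum_single ℤ _ g m

noncomputable def normElement (G : Type*) [Fintype G] : G →₀ ℤ := ∑ g : G, Finsupp.single g 1

variable {G : Type*} [Fintype G]

theorem normElement_apply (g : G) : normElement G g = 1 := by
  classical
  simp [normElement, Finsupp.single_apply]

theorem augmentation_normElement : augmentation G (normElement G) = Fintype.card G := by
  simp [normElement, augmentation_single]

end GroupRing

section Induced

variable {G : Type} [Group G]

theorem augmentation_ind (g : G) (x : G →₀ ℤ) :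
    augmentation G (ind ℤ G ℤ g x) = augmentation G x :=
  Finsupp.sum_mapDomain_index (fun _ => rfl) fun _ _ _ => rfl

variable [Fintype G]

theorem indI_trivial_apply (m : ℤ) :
    indI (Representation.trivial ℤ (G := G) (V := ℤ)) m = m • normElement G := by
  simp [indI_apply, normElement, Finset.smul_sum]

end Induced

namespace GammaMod

variable (G : Type) [Group G] [Fintype G] (n : ℤ)

theorem mk_normElement_one :
    (Submodule.Quotient.mk (normElement G, 1) : GammaMod G n) = 0 :=
  (Submodule.Quotient.mk_eq_zero _).2 ⟨1, by simp [gammaMap, indI_trivial_apply]⟩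

theorem gammaRep_mk (g : G) (x : G →₀ ℤ) (y : Zloc n) :
    gammaRep G n g (Submodule.Quotient.mk (x, y)) = Submodule.Quotient.mk (ind ℤ G ℤ g x, y) :=
  rfl

noncomputable def inr : Zloc n →ₗ[ℤ] GammaMod G n :=
  (LinearMap.range (gammaMap G n)).mkQ ∘ₗ LinearMap.inr ℤ (G →₀ ℤ) (Zloc n)

noncomputable def augMod : GammaMod G n →ₗ[ℤ] ZMod (Fintype.card G) :=
  (LinearMap.range (gammaMap G n)).liftQ
    ((Int.castAddHom _).toIntLinearMap ∘ₗ augmentation G ∘ₗ LinearMap.fst ℤ _ _) <| by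
    rintro _ ⟨m, rfl⟩
    simp [gammaMap, indI_trivial_apply, augmentation_normElement]

noncomputable def dropNorm : GammaMod G n →ₗ[ℤ] (G →₀ ℤ) :=
  (LinearMap.range (gammaMap G n)).liftQ
    (LinearMap.fst ℤ _ _ - (Finsupp.lapply 1 ∘ₗ LinearMap.fst ℤ _ _).smulRight (normElement G)) <| by
    rintro _ ⟨m, rfl⟩
    simp [gammaMap, indI_trivial_apply, normElement_apply]

variable {G n}

theorem augMod_mk (x : G →₀ ℤ) (y : Zloc n) :
    augMod G n (Submodule.Quotient.mk (x, y)) = augmentation G x :=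
  rfl

theorem dropNorm_mk (x : G →₀ ℤ) (y : Zloc n) :
    dropNorm G n (Submodule.Quotient.mk (x, y)) = x - x 1 • normElement G :=
  rfl

theorem augMod_comp_gammaRep (g : G) : augMod G n ∘ₗ gammaRep G n g = augMod G n := by
  refine LinearMap.ext fun z => ?_
  obtain ⟨⟨x, y⟩, rfl⟩ := Submodule.Quotient.mk_surjective _ z
  rw [LinearMap.comp_apply, gammaRep_mk, augMod_mk, augMod_mk, augmentation_ind]

theorem augMod_eq_zero_of_dropNorm_eq_zero {z : GammaMod G n} (hz : dropNorm G n z = 0) :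
    augMod G n z = 0 := by
  obtain ⟨⟨x, y⟩, rfl⟩ := Submodule.Quotient.mk_surjective _ z
  rw [dropNorm_mk, sub_eq_zero] at hz
  rw [augMod_mk, hz, map_zsmul, augmentation_normElement, smul_eq_mul, Int.cast_mul,
    Int.cast_natCast, ZMod.natCast_self, mul_zero]

theorem sum_gammaRep_mk_single_one :
    ∑ g : G, gammaRep G n g (Submodule.Quotient.mk (Finsupp.single 1 1, 0)) = -inr G n 1 := by
  have hsum : ∑ g : G, ((Finsupp.single g 1, 0) : (G →₀ ℤ) × Zloc n) =
      (normElement G, 1) - (0, 1) := by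
    simp [Prod.ext_iff, Prod.fst_sum, Prod.snd_sum, normElement]
  simp only [gammaRep_mk, ind_single, mul_one]
  simp only [← Submodule.mkQ_apply]
  rw [← map_sum, hsum, Submodule.mkQ_apply, Submodule.Quotient.mk_sub, mk_normElement_one, zero_sub]
  rfl

end GammaMod

/-- for `n > 1`, the `ℤG`-module `Γ_n(ℤ)` is weakly injective
if and only if `G` is trivial. -/
theorem gammaMod_weaklyInjective_iff {G : Type} [Group G] [Fintype G]
    (n : ℤ) (hn : 1 < n) :
    WeaklyInjective (gammaRep G n) ↔ Fintype.card G = 1 := by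
  refine ⟨fun h => ?_, fun hG => ?_⟩
  · obtain ⟨θ, hθ⟩ := h.exists_traceMap_eq_id
    have hθinr : GammaMod.dropNorm G n ∘ₗ θ ∘ₗ GammaMod.inr G n = 0 :=
      Zloc.linearMap_finsupp_eq_zero (by omega) _
    set p := GammaMod.augMod G n
    set z₀ : GammaMod G n := Submodule.Quotient.mk (Finsupp.single 1 1, 0)
    refine ZMod.one_eq_zero_iff.1 <| calc
      1 = p (traceMap (gammaRep G n) (gammaRep G n) θ z₀) := by
        rw [hθ, LinearMap.id_apply, GammaMod.augMod_mk, augmentation_single, Int.cast_one]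
      _ = p (θ (∑ g : G, gammaRep G n g z₀)) :=
        traceMap_apply_of_invariant _ GammaMod.augMod_comp_gammaRep θ z₀
      _ = -p (θ (GammaMod.inr G n 1)) := by
        rw [GammaMod.sum_gammaRep_mk_single_one, map_neg, map_neg]
      _ = 0 := neg_eq_zero.2 <|
        GammaMod.augMod_eq_zero_of_dropNorm_eq_zero (LinearMap.congr_fun hθinr 1)
  · have : Subsingleton G := Fintype.card_le_one_iff_subsingleton.1 hG.le
    exact weaklyInjective_of_subsingleton _
end
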